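/- (R23 Regge symmetry / Weyl group symmetry.) For integers m, n, k, i, j with the nine quantities n−k, m−k, k, i, j, m+n−i−j−k, m−i, n−j, i+j−k all nonnegative, one has M(m+n−k; i, j, m+n−i−j−k) · c_{m,n,k}(m−i, n−j) = (-1)^k · M(m+n−k; m−i, n−j, i+j−k) · c_{m,n,k}(i, j), where M(a+b+c; a, b, c) = (a+b+c)!/(a!·b!·c!) denotes the multinomial coefficient. -/

import Mathlib

/-!
Expanding `C(n-k+l, l)` by Vandermonde, applying trinomial revision and then the alternating
identity `∑ₗ (-1)^l C(m-l, k-l) C(b, l-v) = (-1)^v C(m-b-v, k-v)` turns `c` into the dual form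
`c_{m,n,k}(i,j) = ∑ᵥ (-1)^v C(i+j-k, i-v) C(m-i, k-v) C(n-j, v)`.
In this form, after reversing the summation index on one side, the two sides of the symmetry
agree term by term: each term, times its prefactor `M`, is a multinomial coefficient
`(m+n-k)! / (six factorials)`, with `M` grouping the six parts into three pairs and the three
binomials splitting the pairs; the two sides just use two different pairings.
-/

/-- Binomial coefficient for integer arguments: `C a b = a.choose b` when
`0 ≤ b ≤ a`, and `0` otherwise. -/
def C (a b : ℤ) : ℤ := if 0 ≤ b ∧ b ≤ a then (a.toNat.choose b.toNat : ℤ) else 0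

/-- The coordinate function `c_{m,n,k}(i,j)`. -/
def c (m n k i j : ℤ) : ℤ :=
  ∑ l ∈ Finset.range (k.toNat + 1),
    (-1 : ℤ) ^ l * C (i + j - k) (i - l) * C (m - l) (k - l) * C (n - k + l) l

/-- The multinomial coefficient `M(a+b+c; a, b, c) = (a+b+c)!/(a! b! c!)`
for integer arguments (interpreted via `toNat`). -/
def M (a b c : ℤ) : ℤ :=
  ((a + b + c).toNat.factorial / (a.toNat.factorial * b.toNat.factorial * c.toNat.factorial) : ℕ)

open Finset
open scoped Nat

theorem C_eq_zero_iff {a b : ℤ} : C a b = 0 ↔ b < 0 ∨ a < b := by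
  unfold C
  split_ifs with h
  · rw [Nat.cast_eq_zero, Nat.choose_eq_zero_iff]
    omega
  · simp only [true_iff]
    omega

theorem C_eq_choose {a b : ℤ} (ha : 0 ≤ a) (hb : 0 ≤ b) : C a b = a.toNat.choose b.toNat := by
  unfold C
  split_ifs with h
  · rfl
  · rw [Nat.choose_eq_zero_of_lt (by omega), Nat.cast_zero]

theorem C_natCast (a b : ℕ) : C a b = a.choose b := by
  simp [C_eq_choose]

theorem C_pascal {a : ℤ} (ha : 1 ≤ a) (b : ℤ) : C a b = C (a - 1) (b - 1) + C (a - 1) b := by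
  rcases lt_trichotomy b 0 with hb | rfl | hb
  · rw [C_eq_zero_iff.2 (Or.inl hb), C_eq_zero_iff.2 (Or.inl (by omega)),
      C_eq_zero_iff.2 (Or.inl hb), add_zero]
  · rw [C_eq_zero_iff.2 (Or.inl (show (0 : ℤ) - 1 < 0 by norm_num)),
      C_eq_choose (by omega) le_rfl, C_eq_choose (by omega) le_rfl]
    simp
  · rw [C_eq_choose (by omega) (by omega), C_eq_choose (by omega) (by omega),
      C_eq_choose (by omega) (by omega), show a.toNat = (a - 1).toNat + 1 by omega,
      show b.toNat = (b - 1).toNat + 1 by omega, Nat.choose_succ_succ, Nat.cast_add]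

theorem C_mul_C_sub (a s r : ℤ) : C a s * C (a - s) r = C a (s + r) * C (s + r) r := by
  by_cases h : 0 ≤ s ∧ 0 ≤ r ∧ s + r ≤ a
  · rw [C_eq_choose (by omega) (by omega), C_eq_choose (by omega) (by omega),
      C_eq_choose (by omega) (by omega), C_eq_choose (by omega) (by omega),
      show (a - s).toNat = a.toNat - s.toNat by omega,
      show (s + r).toNat = s.toNat + r.toNat by omega, ← Nat.choose_symm_add]
    have := Nat.choose_mul (n := a.toNat) (Nat.le_add_right s.toNat r.toNat)
    rw [Nat.add_sub_cancel_left] at this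
    exact_mod_cast this.symm
  · rw [show C a s * C (a - s) r = 0 by simp only [mul_eq_zero, C_eq_zero_iff]; omega,
      show C a (s + r) * C (s + r) r = 0 by simp only [mul_eq_zero, C_eq_zero_iff]; omega]

theorem C_add_eq_sum {x y : ℤ} (hx : 0 ≤ x) (hy : 0 ≤ y) {l N : ℕ} (hl : l < N) :
    C (x + y) l = ∑ v ∈ range N, C x v * C y (l - v) := by
  lift x to ℕ using hx
  lift y to ℕ using hy
  have hzero : ∀ v ∈ range N, v ∉ range (l + 1) → C x v * C y (l - v) = 0 := by
    intro v _ hv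
    simp only [mem_range, not_lt] at hv
    simp [C_eq_zero_iff.2 (Or.inl (by omega : (l : ℤ) - v < 0))]
  rw [← sum_subset (range_subset_range.2 hl) hzero, ← Nat.cast_add, C_natCast,
    Nat.add_choose_eq, Nat.sum_antidiagonal_eq_sum_range_succ_mk, Nat.cast_sum]
  refine sum_congr rfl fun v hv => ?_
  rw [C_natCast, ← Nat.cast_sub (by simpa [Nat.lt_succ_iff] using hv), C_natCast, Nat.cast_mul]

theorem sum_neg_one_pow_mul_C_mul_C {m k : ℤ} {N : ℕ} (hk : k < N) (b v : ℕ)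
    (hbv : (b : ℤ) + v ≤ m) :
    ∑ l ∈ range N, (-1) ^ l * C (m - l) (k - l) * C b (l - v) =
      (-1) ^ v * C (m - b - v) (k - v) := by
  induction b generalizing v with
  | zero =>
    rw [sum_eq_single v]
    · simp [C_eq_choose]
    · intro l _ hlv
      rw [(C_eq_zero_iff (b := (l : ℤ) - v)).2 (by omega), mul_zero]
    · intro hv
      rw [mem_range, not_lt] at hv
      rw [C_eq_zero_iff.2 (Or.inl (by omega)), mul_zero, zero_mul]
  | succ b ih =>
    have hpascal : ∀ l : ℕ,
        C (b + 1 : ℕ) (l - v) = C b (l - (v + 1 : ℕ)) + C b (l - v) := by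
      intro l
      rw [C_pascal (by omega)]
      push_cast
      ring_nf
    simp only [hpascal, mul_add, sum_add_distrib, ih v (by omega), ih (v + 1) (by push_cast; omega)]
    rw [C_pascal (a := m - b - v) (by omega) (k - v)]
    push_cast
    ring_nf

theorem C_mul_C_add_eq_sum {a x : ℤ} (hx : 0 ≤ x) (s : ℤ) {l N : ℕ} (hl : l < N) :
    C a s * C (x + (a - s)) l = ∑ v ∈ range N, C x v * (C a s * C (a - s) (l - v)) := by
  by_cases h : 0 ≤ a - s
  · rw [C_add_eq_sum hx h hl, mul_sum]
    exact sum_congr rfl fun v _ => by ring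
  · simp [C_eq_zero_iff.2 (Or.inr (by omega : a < s))]

theorem c_natCast_eq_sum {m n i j : ℤ} {K : ℕ} (him : i ≤ m) (hjn : j ≤ n) :
    c m n K i j = ∑ v ∈ range (K + 1),
      (-1) ^ v * C (i + j - K) (i - v) * C (m - i) (K - v) * C (n - j) v := by
  have hexpand : ∀ l ∈ range (K + 1), C (i + j - K) (i - l) * C (n - K + l) l =
      ∑ v ∈ range (K + 1), C (n - j) v * (C (i + j - K) (i - v) * C (i - v) (l - v)) := by
    intro l hl
    have hrev : ∀ v : ℕ, C (i + j - K) (i - l) * C (i + j - K - (i - l)) (l - v) =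
        C (i + j - K) (i - v) * C (i - v) (l - v) := by
      intro v
      rw [C_mul_C_sub, sub_add_sub_cancel]
    rw [show n - K + l = (n - j) + (i + j - K - (i - l)) by ring,
      C_mul_C_add_eq_sum (by omega) _ (mem_range.1 hl)]
    simp only [hrev]
  have hcollapse : ∀ v ∈ range (K + 1), C (i + j - K) (i - v) *
      ∑ l ∈ range (K + 1), (-1) ^ l * C (m - l) (K - l) * C (i - v) (l - v) =
      C (i + j - K) (i - v) * ((-1) ^ v * C (m - i) (K - v)) := by
    intro v _
    by_cases hiv : 0 ≤ i - v
    · lift i - v to ℕ using hiv with b hb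
      rw [sum_neg_one_pow_mul_C_mul_C (by omega) b v (by omega), show m - b - v = m - i by omega]
    · rw [C_eq_zero_iff.2 (Or.inl (by omega)), zero_mul, zero_mul]
  calc c m n K i j
      = ∑ l ∈ range (K + 1), (-1) ^ l * C (m - l) (K - l) *
          (C (i + j - K) (i - l) * C (n - K + l) l) := by
        unfold c
        rw [Int.toNat_natCast]
        exact sum_congr rfl fun l _ => by ring
    _ = ∑ v ∈ range (K + 1), C (n - j) v * (C (i + j - K) (i - v) *
          ∑ l ∈ range (K + 1), (-1) ^ l * C (m - l) (K - l) * C (i - v) (l - v)) := by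
        rw [sum_congr rfl fun l hl => congrArg _ (hexpand l hl)]
        simp only [mul_sum]
        rw [sum_comm]
        exact sum_congr rfl fun v _ => sum_congr rfl fun l _ => by ring
    _ = _ := by
        rw [sum_congr rfl fun v hv => congrArg _ (hcollapse v hv)]
        exact sum_congr rfl fun v _ => by ring

theorem M_natCast_eq_div (a b c : ℕ) : (M a b c : ℚ) = (a + b + c)! / (a ! * b ! * c !) := by
  have hdvd : a ! * b ! * c ! ∣ (a + b + c)! :=
    (Nat.mul_dvd_mul_right (Nat.factorial_mul_factorial_dvd_factorial_add a b) _).trans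
      (Nat.factorial_mul_factorial_dvd_factorial_add _ _)
  rw [M, ← Nat.cast_add, ← Nat.cast_add]
  simp only [Int.toNat_natCast, Int.cast_natCast, Nat.cast_div_charZero hdvd, Nat.cast_mul]

-- No sign conditions are needed: a negative part makes one binomial vanish on each side.
theorem M_mul_C_mul_C_mul_C_regroup (u w v z p q : ℤ) :
    M (u + w) (v + z) (p + q) * (C (p + q) p * C (u + w) u * C (v + z) v) =
      M (v + p) (u + q) (w + z) * (C (w + z) w * C (v + p) v * C (u + q) u) := by
  by_cases h : 0 ≤ u ∧ 0 ≤ w ∧ 0 ≤ v ∧ 0 ≤ z ∧ 0 ≤ p ∧ 0 ≤ q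
  · obtain ⟨hu, hw, hv, hz, hp, hq⟩ := h
    lift u to ℕ using hu
    lift w to ℕ using hw
    lift v to ℕ using hv
    lift z to ℕ using hz
    lift p to ℕ using hp
    lift q to ℕ using hq
    simp only [← Nat.cast_add, C_natCast]
    apply Int.cast_injective (α := ℚ)
    simp only [Int.cast_mul, Int.cast_natCast, M_natCast_eq_div, Nat.cast_add_choose]
    rw [show v + p + (u + q) + (w + z) = u + w + (v + z) + (p + q) by ring]
    field_simp
  · rw [show C (p + q) p * C (u + w) u * C (v + z) v = 0 by
        simp only [mul_eq_zero, C_eq_zero_iff]; omega,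
      show C (w + z) w * C (v + p) v * C (u + q) u = 0 by
        simp only [mul_eq_zero, C_eq_zero_iff]; omega, mul_zero, mul_zero]

theorem regge_R23_symmetry_general (m n k i j : ℤ)
    (h3 : 0 ≤ k) (h4 : 0 ≤ i) (h5 : 0 ≤ j)
    (h7 : 0 ≤ m - i) (h8 : 0 ≤ n - j) :
    M i j (m + n - i - j - k) * c m n k (m - i) (n - j) =
    (-1 : ℤ) ^ k.toNat * M (m - i) (n - j) (i + j - k) * c m n k i j := by
  lift k to ℕ using h3 with K
  rw [c_natCast_eq_sum (by omega) (by omega), c_natCast_eq_sum (by omega) (by omega),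
    Int.toNat_natCast, mul_sum, mul_sum, ← sum_range_reflect]
  refine sum_congr rfl fun v hv => ?_
  obtain ⟨t, rfl⟩ := Nat.exists_eq_add_of_le (mem_range_succ_iff.1 hv)
  rw [show v + t + 1 - 1 - v = t by omega, sub_sub_cancel, sub_sub_cancel]
  push_cast
  have hterm : M i j (m + n - i - j - (v + t)) *
      (C (m - i + (n - j) - (v + t)) (m - i - t) * C i v * C j t) =
      M (m - i) (n - j) (i + j - (v + t)) *
        (C (i + j - (v + t)) (i - v) * C (m - i) t * C (n - j) v) := by
    convert M_mul_C_mul_C_mul_C_regroup v (i - v) t (j - t) (m - i - t) (n - j - v) using 5 <;> ring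
  have hsign : (-1 : ℤ) ^ v * (-1) ^ v = 1 := pow_mul_pow_eq_one v (by norm_num)
  rw [pow_add, add_sub_cancel_right, add_sub_cancel_left]
  linear_combination (-1) ^ t * hterm - (-1) ^ t * M (m - i) (n - j) (i + j - (v + t)) *
    (C (i + j - (v + t)) (i - v) * C (m - i) t * C (n - j) v) * hsign

theorem regge_R23_symmetry (m n k i j : ℤ)
    (h1 : 0 ≤ n - k) (h2 : 0 ≤ m - k) (h3 : 0 ≤ k) (h4 : 0 ≤ i) (h5 : 0 ≤ j)
    (h6 : 0 ≤ m + n - i - j - k) (h7 : 0 ≤ m - i) (h8 : 0 ≤ n - j) (h9 : 0 ≤ i + j - k) :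
    M i j (m + n - i - j - k) * c m n k (m - i) (n - j) =
    (-1 : ℤ) ^ k.toNat * M (m - i) (n - j) (i + j - k) * c m n k i j :=
  regge_R23_symmetry_general m n k i j h3 h4 h5 h7 h8
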